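/- Let R be an associative unital ring (not necessarily commutative), α : ℤ → R a family of elements, and S_s^k(n) the associated non-commutative Svinin polynomials. Then for every integer r ≥ 0 and every n ∈ ℤ, S_{r+1}^{r+1}(n+r) − S_{r+1}^{r+1}(n+r−1) = α_n · S_{r+1}^r(n+r) − S_{r+1}^r(n+r−2) · α_{n−1}. -/

import Mathlib

/-- Non-commutative Svinin polynomials: `svinin α s k n` is `S_s^k(n)`, defined by
`S_s^0(n) = 1` and `S_s^k(n) = Σ_{j=0}^{s−1} α_{n−k−j+1} · S_{s−j}^{k−1}(n−j)` for `k ≥ 1`. -/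
def svinin {R : Type*} [Ring R] (α : ℤ → R) : ℕ → ℕ → ℤ → R
  | _, 0, _ => 1
  | s, k + 1, n =>
      ∑ j ∈ Finset.range s,
        α (n - ((k : ℤ) + 1) - (j : ℤ) + 1) * svinin α (s - j) k (n - (j : ℤ))

/-!
Unfolding the recursion, `S_s^k(n)` is the sum of `α_{b_1+1} ⋯ α_{b_k+k}` over the weakly
decreasing sequences `n-k ≥ b_1 ≥ ⋯ ≥ b_k ≥ n-k-s+1`. Splitting off the sequences with
`b_1` maximal gives `S_{s+1}^{k+1}(m) = α_{m-k} S_{s+1}^k(m) + S_s^{k+1}(m-1)`, and splitting off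
those with `b_{k+1}` minimal gives `S_{s+1}^{k+1}(m) = S_s^{k+1}(m) + S_{s+1}^k(m-1) α_{m-s}`.
Expanding `S_{s+1}^{k+1}(m)` by the first rule and `S_{s+1}^{k+1}(m-1)` by the second, the common
term `S_s^{k+1}(m-1)` cancels in the difference.
-/

section

variable {R : Type*} [Ring R] (α : ℤ → R)

@[simp]
theorem svinin_width_zero (k : ℕ) (n : ℤ) : svinin α 0 (k + 1) n = 0 := by
  rw [svinin, Finset.sum_range_zero]

theorem svinin_succ_succ_eq_mul_add (s k : ℕ) (m : ℤ) :
    svinin α (s + 1) (k + 1) m =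
      α (m - k) * svinin α (s + 1) k m + svinin α s (k + 1) (m - 1) := by
  rw [svinin, svinin, Finset.sum_range_succ', add_comm]
  congr 1
  · simp [sub_add]
  · refine Finset.sum_congr rfl fun j _ => ?_
    push_cast
    rw [show m - (k + 1) - (j + 1) + 1 = m - 1 - (k + 1) - j + 1 by ring,
      show m - (j + 1) = m - 1 - j by ring]

theorem svinin_succ_succ_eq_add_mul (s k : ℕ) (m : ℤ) :
    svinin α (s + 1) (k + 1) m =
      svinin α s (k + 1) m + svinin α (s + 1) k (m - 1) * α (m - s) := by
  induction k generalizing s m with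
  | zero =>
    simp only [svinin, Finset.sum_range_succ, mul_one, one_mul, Nat.cast_zero, zero_add]
    rw [sub_right_comm, sub_add_cancel]
  | succ k ihk =>
    have hidx (m : ℤ) : m - 1 - k = m - ((k + 1 : ℕ) : ℤ) := by push_cast; ring
    induction s generalizing m with
    | zero =>
      rw [svinin_succ_succ_eq_mul_add, svinin_succ_succ_eq_mul_add α 0 k (m - 1), ihk, hidx]
      simp [mul_assoc]
    | succ s ihs =>
      rw [svinin_succ_succ_eq_mul_add, ihk, ihs, svinin_succ_succ_eq_mul_add α s (k + 1) m,
        svinin_succ_succ_eq_mul_add α (s + 1) k (m - 1), hidx,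
        show m - 1 - s = m - (s + 1 : ℕ) by push_cast; ring]
      simp only [mul_add, add_mul, mul_assoc]
      abel

theorem svinin_succ_sub_svinin_succ (s k : ℕ) (m : ℤ) :
    svinin α (s + 1) (k + 1) m - svinin α (s + 1) (k + 1) (m - 1) =
      α (m - k) * svinin α (s + 1) k m - svinin α (s + 1) k (m - 2) * α (m - 1 - s) := by
  rw [svinin_succ_succ_eq_mul_add, svinin_succ_succ_eq_add_mul α s k (m - 1),
    show m - 1 - 1 = m - 2 by ring]
  abel

end

/-- For every `r ≥ 0` and `n ∈ ℤ`:
`S_{r+1}^{r+1}(n+r) − S_{r+1}^{r+1}(n+r−1) = α_n · S_{r+1}^r(n+r) − S_{r+1}^r(n+r−2) · α_{n−1}`. -/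
theorem svinin_telescoping_identity {R : Type*} [Ring R] (α : ℤ → R)
    (r : ℕ) (n : ℤ) :
    svinin α (r + 1) (r + 1) (n + r) - svinin α (r + 1) (r + 1) (n + r - 1) =
      α n * svinin α (r + 1) r (n + r) - svinin α (r + 1) r (n + r - 2) * α (n - 1) := by
  have h := svinin_succ_sub_svinin_succ α r r (n + r)
  rwa [add_sub_cancel_right, show n + r - 1 - r = n - 1 by ring] at h
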